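/- For every N, the single-vertex 2-graph semigroup F_θ⁺ contains commuting elements e_u and f_v (u a word in the e's, v a word in the f's, both of length N!·t for some t ≥ 1) such that the associated ring-by-ring symmetry quotient group has order at least N. Concretely: the induced permutation θ' of {1,…,m}^{N!} × {1,…,n}^{N!} (defined by e_u f_v = f_{v'} e_{u'} iff θ'(u,v) = (u',v')) either is the identity — in which case any primitive u of length N! satisfies e_u f_v = f_v e_u for appropriate v with trivial shift-symmetry beyond order N! — or θ' has a cycle of length t ≥ 2, producing a commuting pair on C_{N!·t} whose symmetry subgroup ⟨p⟩ satisfies p ≥ N+1. -/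

import Mathlib

inductive TwoGraphGen (I J : Type) : Type
  | e : I → TwoGraphGen I J
  | f : J → TwoGraphGen I J

def twoGraphRel {I J : Type} (θ : Equiv.Perm (I × J)) :
    FreeMonoid (TwoGraphGen I J) → FreeMonoid (TwoGraphGen I J) → Prop :=
  fun a b => ∃ i j,
    a = FreeMonoid.of (TwoGraphGen.e i) * FreeMonoid.of (TwoGraphGen.f j) ∧
    b = FreeMonoid.of (TwoGraphGen.f (θ (i, j)).2) * FreeMonoid.of (TwoGraphGen.e (θ (i, j)).1)

def FTheta {I J : Type} (θ : Equiv.Perm (I × J)) : Type :=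
  (conGen (twoGraphRel θ)).Quotient

instance {I J : Type} (θ : Equiv.Perm (I × J)) : Monoid (FTheta θ) :=
  inferInstanceAs (Monoid (conGen (twoGraphRel θ)).Quotient)

def FTheta.E {I J : Type} (θ : Equiv.Perm (I × J)) (i : I) : FTheta θ :=
  (conGen (twoGraphRel θ)).mk' (FreeMonoid.of (TwoGraphGen.e i))

def FTheta.F {I J : Type} (θ : Equiv.Perm (I × J)) (j : J) : FTheta θ :=
  (conGen (twoGraphRel θ)).mk' (FreeMonoid.of (TwoGraphGen.f j))

def FTheta.eWord {I J : Type} (θ : Equiv.Perm (I × J)) (u : List I) : FTheta θ :=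
  (u.map (FTheta.E θ)).prod

def FTheta.fWord {I J : Type} (θ : Equiv.Perm (I × J)) (v : List J) : FTheta θ :=
  (v.map (FTheta.F θ)).prod

/-!
The relations `e_i f_j = f_{j'} e_{i'}` move any `f`-word past any `e`-word, which gives an
injective map `(u, v) ↦ (u', v')` on pairs of words of fixed lengths; hence every pair lies on a
cycle `(u₀, v₀) ↦ (u₁, v₁) ↦ ⋯ ↦ (u_t, v_t) = (u₀, v₀)`. Telescoping
`e_{u_s} f_{v_s} = f_{v_{s+1}} e_{u_{s+1}}` around the cycle shows that `U = u_{t-1} ⋯ u_1 u_0`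
and `V = v_0 v_1 ⋯ v_{t-1}` give commuting `e_U`, `f_V`. Starting from `u₀ = 1 0 ⋯ 0` of length
`N!`, the word `U` ends in `u₀`, so no rotation by `0 < d < N ≤ N!` fixes it.
-/

open Function

theorem Set.InjOn.mem_periodicPts {α : Type*} {f : α → α} {s : Set α} (hinj : s.InjOn f)
    (hmaps : s.MapsTo f s) (hs : s.Finite) {x : α} (hx : x ∈ s) : x ∈ periodicPts f := by
  have : Finite s := hs.to_subtype
  obtain ⟨t, ht, hper⟩ :=
    Function.mem_periodicPts.1 ((hmaps.restrict_inj.2 hinj).mem_periodicPts ⟨x, hx⟩)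
  refine mk_mem_periodicPts ht ?_
  have := congrArg Subtype.val hper
  rwa [hmaps.iterate_restrict] at this

theorem List.rotate_ne_self_of_isSuffix {α : Type*} {l w : List α} (hw : w <:+ l) {i d : ℕ}
    (hid : i + d < w.length) (hne : w[i]? ≠ w[i + d]?) : l.rotate d ≠ l := by
  obtain ⟨l', rfl⟩ := hw
  intro hrot
  have hlen : l'.length + (i + d) < (l' ++ w).length := by simp; omega
  have key := List.getElem?_rotate (l := l' ++ w) (n := d) (m := l'.length + i) (by omega)
  rw [hrot, Nat.mod_eq_of_lt (by omega), List.getElem?_append_right (by omega),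
    List.getElem?_append_right (by omega)] at key
  exact hne (by simpa [add_assoc] using key)

section Exchange

variable {M : Type*} [Monoid M] {p q : ℕ → M}

theorem prod_reverse_map_range_mul_of_exchange (h : ∀ s, p s * q s = q (s + 1) * p (s + 1))
    (k : ℕ) :
    ((List.range k).map p).reverse.prod * q 0 =
      q k * ((List.range k).map (fun s => p (s + 1))).reverse.prod := by
  induction k with
  | zero => simp
  | succ k ih =>
    simp only [List.range_succ, List.map_append, List.map_singleton, List.reverse_append,
      List.reverse_singleton, List.singleton_append, List.prod_cons]
    rw [mul_assoc, ih, ← mul_assoc, h, mul_assoc]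

theorem commute_prod_of_exchange_of_periodic (h : ∀ s, p s * q s = q (s + 1) * p (s + 1))
    {t : ℕ} (hp : ∀ s, p (s + t) = p s) (hq : ∀ s, q (s + t) = q s) :
    Commute ((List.range t).map p).reverse.prod ((List.range t).map q).prod := by
  set P : ℕ → M := fun a => ((List.range t).map (fun s => p (a + s))).reverse.prod
  have hPq : ∀ a, P a * q a = q a * P (a + 1) := by
    intro a
    have := prod_reverse_map_range_mul_of_exchange (p := fun s => p (a + s))
      (q := fun s => q (a + s)) (fun s => h (a + s)) t
    simpa [P, hq, add_assoc, add_comm 1] using this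
  have hPQ : ∀ k, P 0 * ((List.range k).map q).prod = ((List.range k).map q).prod * P k := by
    intro k
    induction k with
    | zero => simp
    | succ k ih =>
      rw [List.range_succ, List.map_append, List.prod_append, ← mul_assoc, ih, mul_assoc,
        List.map_singleton, List.prod_singleton, hPq, mul_assoc]
  have hPt : P t = P 0 := by simp [P, add_comm t, hp]
  simpa [Commute, SemiconjBy, hPt, P] using hPQ t

end Exchange

namespace FTheta

variable {I J : Type} (θ : Equiv.Perm (I × J))

def swapLetter : List I → J → List I × J
  | [], j => ([], j)
  | a :: u, j =>
    ((θ (a, (swapLetter u j).2)).1 :: (swapLetter u j).1, (θ (a, (swapLetter u j).2)).2)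

/-- The paper's `θ'`: `swapWords θ u v = (u', v')` when `e_u f_v = f_{v'} e_{u'}`. -/
def swapWords : List I → List J → List I × List J
  | u, [] => (u, [])
  | u, b :: v =>
    ((swapWords (swapLetter θ u b).1 v).1,
      (swapLetter θ u b).2 :: (swapWords (swapLetter θ u b).1 v).2)

@[simp]
theorem swapLetter_fst_length (u : List I) (j : J) : (swapLetter θ u j).1.length = u.length := by
  induction u with
  | nil => rfl
  | cons a u ih => simp [swapLetter, ih]

@[simp]
theorem swapWords_fst_length (u : List I) (v : List J) :
    (swapWords θ u v).1.length = u.length := by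
  induction v generalizing u with
  | nil => rfl
  | cons b v ih => simp [swapWords, ih]

@[simp]
theorem swapWords_snd_length (u : List I) (v : List J) :
    (swapWords θ u v).2.length = v.length := by
  induction v generalizing u with
  | nil => rfl
  | cons b v ih => simp [swapWords, ih]

theorem swapLetter_injective : Injective (uncurry (swapLetter θ)) := by
  rintro ⟨u, j⟩ ⟨u', j'⟩ h
  induction u generalizing u' with
  | nil => cases u' <;> simp_all [swapLetter]
  | cons a u ih =>
    cases u' with
    | nil => simp [swapLetter] at h
    | cons a' u' =>
      simp only [uncurry, swapLetter, Prod.mk.injEq, List.cons.injEq] at h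
      obtain ⟨⟨hfst, hrest⟩, hsnd⟩ := h
      obtain ⟨rfl, hmid⟩ := Prod.mk.inj (θ.injective (Prod.ext hfst hsnd))
      obtain ⟨rfl, rfl⟩ := Prod.mk.inj (ih u' (Prod.ext hrest hmid))
      rfl

theorem swapWords_injective : Injective (uncurry (swapWords θ)) := by
  rintro ⟨u, v⟩ ⟨u', v'⟩ h
  induction v generalizing u u' v' with
  | nil => cases v' <;> simp_all [swapWords]
  | cons b v ih =>
    cases v' with
    | nil => simp [swapWords] at h
    | cons b' v' =>
      simp only [uncurry, swapWords, Prod.mk.injEq, List.cons.injEq] at h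
      obtain ⟨hfst, hhead, hrest⟩ := h
      obtain ⟨hmid, rfl⟩ := Prod.mk.inj (ih _ _ _ (Prod.ext hfst hrest))
      obtain ⟨rfl, rfl⟩ := Prod.mk.inj (swapLetter_injective θ (Prod.ext hmid hhead))
      rfl

theorem E_mul_F (i : I) (j : J) :
    E θ i * F θ j = F θ (θ (i, j)).2 * E θ (θ (i, j)).1 :=
  (Con.eq _).mpr (ConGen.Rel.of _ _ ⟨i, j, rfl, rfl⟩)

theorem eWord_mul_F (u : List I) (j : J) :
    eWord θ u * F θ j = F θ (swapLetter θ u j).2 * eWord θ (swapLetter θ u j).1 := by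
  induction u with
  | nil => simp [eWord, swapLetter]
  | cons a u ih =>
    simp only [eWord, swapLetter, List.map_cons, List.prod_cons] at ih ⊢
    rw [mul_assoc, ih, ← mul_assoc, E_mul_F, mul_assoc]

theorem eWord_mul_fWord (u : List I) (v : List J) :
    eWord θ u * fWord θ v = fWord θ (swapWords θ u v).2 * eWord θ (swapWords θ u v).1 := by
  induction v generalizing u with
  | nil => simp [fWord, swapWords]
  | cons b v ih =>
    simp only [fWord, swapWords, List.map_cons, List.prod_cons] at ih ⊢
    rw [← mul_assoc, eWord_mul_F, mul_assoc, ih, mul_assoc]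

theorem eWord_flatten (L : List (List I)) : eWord θ L.flatten = (L.map (eWord θ)).prod := by
  simp only [eWord, List.map_flatten, List.prod_flatten, List.map_map]
  rfl

theorem fWord_flatten (L : List (List J)) : fWord θ L.flatten = (L.map (fWord θ)).prod := by
  simp only [fWord, List.map_flatten, List.prod_flatten, List.map_map]
  rfl

theorem exists_isSuffix_commute_eWord_fWord [Finite I] [Finite J] (u₀ : List I)
    (v₀ : List J) :
    ∃ t, 1 ≤ t ∧ ∃ (U : List I) (V : List J), U.length = t * u₀.length ∧
      V.length = t * v₀.length ∧ u₀ <:+ U ∧ Commute (eWord θ U) (fWord θ V) := by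
  set g : List I × List J → List I × List J := uncurry (swapWords θ)
  set S : Set (List I × List J) := {u | u.length = u₀.length} ×ˢ {v | v.length = v₀.length}
  have hmaps : S.MapsTo g S := fun x hx =>
    ⟨(swapWords_fst_length θ _ _).trans hx.1, (swapWords_snd_length θ _ _).trans hx.2⟩
  have hfin : S.Finite := (List.finite_length_eq I _).prod (List.finite_length_eq J _)
  obtain ⟨t, ht, hper⟩ := mem_periodicPts.1
    ((swapWords_injective θ).injOn.mem_periodicPts hmaps hfin (x := (u₀, v₀)) ⟨rfl, rfl⟩)
  set x : ℕ → List I × List J := fun s => g^[s] (u₀, v₀)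
  have hlen : ∀ s, (x s).1.length = u₀.length ∧ (x s).2.length = v₀.length :=
    fun s => hmaps.iterate s ⟨rfl, rfl⟩
  have hperiodic : ∀ s, x (s + t) = x s := fun s =>
    (iterate_add_apply g s t _).trans (congrArg g^[s] hper)
  have hexchange : ∀ s, eWord θ (x s).1 * fWord θ (x s).2 =
      fWord θ (x (s + 1)).2 * eWord θ (x (s + 1)).1 := fun s => by
    rw [show x (s + 1) = g (x s) from iterate_succ_apply' g s _, eWord_mul_fWord]
    rfl
  refine ⟨t, ht, ((List.range t).map (fun s => (x s).1)).reverse.flatten,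
    ((List.range t).map (fun s => (x s).2)).flatten, ?_, ?_, ?_, ?_⟩
  · simp [List.length_flatten, Function.comp_def, hlen]
  · simp [List.length_flatten, Function.comp_def, hlen]
  · obtain ⟨k, rfl⟩ : ∃ k, t = k + 1 := ⟨t - 1, by omega⟩
    simp only [List.range_succ_eq_map, List.map_cons, List.reverse_cons, List.flatten_append,
      List.flatten_cons, List.flatten_nil, List.append_nil]
    exact List.suffix_append _ _
  · simp only [eWord_flatten, fWord_flatten, List.map_reverse, List.map_map]
    exact commute_prod_of_exchange_of_periodic hexchange (fun s => by simp [hperiodic])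
      (fun s => by simp [hperiodic])

end FTheta

theorem arbitrarily_long_commuting_words_general {m n : ℕ} (hm : 2 ≤ m) (hn : 2 ≤ n)
    (θ : Equiv.Perm (Fin m × Fin n)) (N : ℕ) :
    ∃ (t : ℕ) (u : List (Fin m)) (v : List (Fin n)),
      1 ≤ t ∧
      u.length = N.factorial * t ∧ v.length = N.factorial * t ∧
      FTheta.eWord θ u * FTheta.fWord θ v = FTheta.fWord θ v * FTheta.eWord θ u ∧
      ∀ d : ℕ, 0 < d → d < N → ¬(u.rotate d = u ∧ v.rotate d = v) := by
  set K := N.factorial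
  have hK : 0 < K := N.factorial_pos
  set u₀ : List (Fin m) := ⟨1, hm⟩ :: List.replicate (K - 1) ⟨0, by omega⟩
  have hu₀ : u₀.length = K := by simp [u₀]; omega
  obtain ⟨t, ht, U, V, hU, hV, hsuffix, hcomm⟩ :=
    FTheta.exists_isSuffix_commute_eWord_fWord θ u₀ (List.replicate K ⟨0, by omega⟩)
  refine ⟨t, U, V, ht, by rw [hU, hu₀, mul_comm], by simp [hV, mul_comm], hcomm.eq, ?_⟩
  rintro d hd hdN ⟨hrot, -⟩
  have hdK : d - 1 < K - 1 := by have := N.self_le_factorial; omega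
  refine List.rotate_ne_self_of_isSuffix hsuffix (i := 0) (by omega) ?_ hrot
  simp [u₀, List.getElem?_cons, hd.ne', hdK]

/-- For every N ≥ 1 there is a commuting pair e_u, f_v with
|u| = |v| = N!·t for some t ≥ 1 whose ring-by-ring symmetry quotient has order at
least N; i.e. no common cyclic rotation of period d with 0 < d < N preserves both
labelings, so the symmetry quotient group of the associated cyclic group construction
has order at least N. -/
theorem arbitrarily_long_commuting_words {m n : ℕ} (hm : 2 ≤ m) (hn : 2 ≤ n)
    (θ : Equiv.Perm (Fin m × Fin n)) (N : ℕ) (hN : 0 < N) :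
    ∃ (t : ℕ) (u : List (Fin m)) (v : List (Fin n)),
      1 ≤ t ∧
      u.length = N.factorial * t ∧ v.length = N.factorial * t ∧
      FTheta.eWord θ u * FTheta.fWord θ v = FTheta.fWord θ v * FTheta.eWord θ u ∧
      ∀ d : ℕ, 0 < d → d < N → ¬(u.rotate d = u ∧ v.rotate d = v) :=
  arbitrarily_long_commuting_words_general hm hn θ N
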